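/- Let M be a cancellative additive commutative monoid equipped with an additive monoid homomorphism deg : M → ℕ such that for every k ∈ ℕ the set {m ∈ M : deg m = k} is finite. Let T be a type and φ : T → M a map all of whose fibers are finite. For D, m ∈ M write D ≼ m if there exists c ∈ M with D + c = m. Then all the sets appearing below are finite and for every k ∈ ℕ one has the convolution identity Σ_{m ∈ M, deg m = k} #{t ∈ T : φ(t) ≼ m} = Σ_{j + l = k} #{c ∈ M : deg c = j} · #{t ∈ T : deg(φ(t)) = l}. Equivalently, as formal power series in ℤ⟦T⟧, (Σ_{c ∈ M} T^{deg c}) · (Σ_{D ∈ M} H_D T^{deg D}) = Σ_{E ∈ M} S_E T^{deg E}, where H_D := #{t : φ(t) = D} and S_E := #{t : φ(t) ≼ E}. -/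

import Mathlib

/-!
Both sides of the convolution identity count the pairs `(c, t) ∈ M × T` with
`deg c + deg (φ t) = k`. Grouping them by `(deg c, deg (φ t))` gives the right-hand side;
grouping them by `m = c + φ t` gives the left-hand side, because by cancellation `c` is
determined by `t` and `m`, so the pairs over a fixed `m` correspond to the `t` with `φ t ≼ m`.
-/

theorem Set.ncard_preimage_finset_eq_sum {α β : Type*} {f : α → β} {s : Finset β}
    (hf : ∀ b ∈ s, {a | f a = b}.Finite) :
    (f ⁻¹' s).ncard = ∑ b ∈ s, {a | f a = b}.ncard :=
  Finset.card_preimage_eq_sum_card_image_eq hf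

theorem ncard_setOf_comp_eq_sum {α β γ : Type*} {f : α → β} {g : β → γ} {c : γ}
    (hg : {b | g b = c}.Finite) (hf : ∀ b, {a | f a = b}.Finite) :
    {a | g (f a) = c}.ncard = ∑ b ∈ hg.toFinset, {a | f a = b}.ncard := by
  rw [← Set.ncard_preimage_finset_eq_sum fun b _ => hf b]
  congr
  ext; simp

open Finset.HasAntidiagonal in
theorem ncard_setOf_add_eq_sum_antidiagonal {α β A : Type*} [AddMonoid A]
    [Finset.HasAntidiagonal A] {f : α → A} {g : β → A}
    (hf : ∀ a, {x | f x = a}.Finite) (hg : ∀ b, {y | g y = b}.Finite) (k : A) :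
    {p : α × β | f p.1 + g p.2 = k}.ncard
      = ∑ ij ∈ antidiagonal k, {x | f x = ij.1}.ncard * {y | g y = ij.2}.ncard := by
  have hfiber (ij : A × A) :
      {p : α × β | (f p.1, g p.2) = ij} = {x | f x = ij.1} ×ˢ {y | g y = ij.2} := by
    ext p
    simp [Prod.ext_iff]
  have hpreimage : {p : α × β | f p.1 + g p.2 = k}
      = (fun p : α × β => (f p.1, g p.2)) ⁻¹' antidiagonal k := by
    ext; simp
  rw [hpreimage, Set.ncard_preimage_finset_eq_sum fun ij _ => hfiber ij ▸ (hf ij.1).prod (hg ij.2)]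
  simp only [hfiber, Set.ncard_prod]

section

variable {M T : Type*}

theorem injOn_snd_setOf_add_eq [AddMonoid M] [IsRightCancelAdd M] (φ : T → M) (m : M) :
    Set.InjOn Prod.snd {p : M × T | p.1 + φ p.2 = m} := by
  rintro ⟨c, t⟩ (hc : c + φ t = m) ⟨c', t'⟩ (hc' : c' + φ t' = m) (rfl : t = t')
  rw [add_right_cancel (hc.trans hc'.symm)]

theorem image_snd_setOf_add_eq [AddCommMonoid M] (φ : T → M) (m : M) :
    Prod.snd '' {p : M × T | p.1 + φ p.2 = m} = {t | ∃ c, φ t + c = m} := by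
  ext t
  simp [add_comm]

theorem sum_ncard_setOf_exists_add_eq [AddCommMonoid M] [IsRightCancelAdd M] (φ : T → M)
    (s : Finset M) (h : ∀ m ∈ s, {t | ∃ c, φ t + c = m}.Finite) :
    ∑ m ∈ s, {t | ∃ c, φ t + c = m}.ncard = {p : M × T | p.1 + φ p.2 ∈ s}.ncard := by
  have hfiber (m : M) :
      {t | ∃ c, φ t + c = m}.ncard = {p : M × T | p.1 + φ p.2 = m}.ncard := by
    rw [← image_snd_setOf_add_eq, (injOn_snd_setOf_add_eq φ m).ncard_image]
  simp only [hfiber]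
  exact (Set.ncard_preimage_finset_eq_sum fun m hm =>
    (image_snd_setOf_add_eq φ m ▸ h m hm).of_finite_image (injOn_snd_setOf_add_eq φ m)).symm

theorem finite_setOf_exists_add_eq [AddMonoid M] (deg : M →+ ℕ)
    (hdeg : ∀ k : ℕ, {m : M | deg m = k}.Finite)
    {φ : T → M} (hφ : ∀ D : M, {t : T | φ t = D}.Finite) (m : M) :
    {t : T | ∃ c : M, φ t + c = m}.Finite := by
  have hbounded : {D : M | deg D ≤ deg m}.Finite :=
    (Set.finite_Iic (deg m)).preimage' fun l _ => hdeg l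
  refine (hbounded.preimage' fun D _ => hφ D).subset ?_
  rintro t ⟨c, rfl⟩
  simp

end

/-- Combinatorial core of the reduction of the height zeta function:
for a cancellative additive monoid `M` with a degree homomorphism having finite
fibers, and a map `φ : T → M` with finite fibers, all relevant sets are finite
and one has the convolution identity
`∑_{deg m = k} #{t : φ t ≼ m} = ∑_{j+l=k} #{c : deg c = j} * #{t : deg (φ t) = l}`,
equivalently `(∑_c T^{deg c}) * (∑_D H_D T^{deg D}) = ∑_E S_E T^{deg E}` in `ℤ⟦T⟧`. -/
theorem height_zeta_convolution
    {M : Type*} [AddCommMonoid M] [IsCancelAdd M]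
    (deg : M →+ ℕ) (hdeg : ∀ k : ℕ, {m : M | deg m = k}.Finite)
    {T : Type*} (φ : T → M) (hφ : ∀ D : M, {t : T | φ t = D}.Finite) :
    (∀ m : M, {t : T | ∃ c : M, φ t + c = m}.Finite) ∧
    (∀ l : ℕ, {t : T | deg (φ t) = l}.Finite) ∧
    (∀ k : ℕ,
      ∑ m ∈ (hdeg k).toFinset, {t : T | ∃ c : M, φ t + c = m}.ncard
        = ∑ jl ∈ Finset.HasAntidiagonal.antidiagonal k,
            {c : M | deg c = jl.1}.ncard * {t : T | deg (φ t) = jl.2}.ncard) ∧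
    (PowerSeries.mk (fun j : ℕ => ({c : M | deg c = j}.ncard : ℤ)))
        * (PowerSeries.mk (fun k : ℕ =>
            ∑ D ∈ (hdeg k).toFinset, ({t : T | φ t = D}.ncard : ℤ)))
      = PowerSeries.mk (fun k : ℕ =>
            ∑ E ∈ (hdeg k).toFinset, ({t : T | ∃ c : M, φ t + c = E}.ncard : ℤ)) := by
  have hbelow := finite_setOf_exists_add_eq deg hdeg hφ
  have hfib (l : ℕ) : {t : T | deg (φ t) = l}.Finite := (hdeg l).preimage' fun D _ => hφ D
  have hconv (k : ℕ) : ∑ m ∈ (hdeg k).toFinset, {t : T | ∃ c : M, φ t + c = m}.ncard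
      = ∑ jl ∈ Finset.HasAntidiagonal.antidiagonal k,
        {c : M | deg c = jl.1}.ncard * {t : T | deg (φ t) = jl.2}.ncard := by
    rw [sum_ncard_setOf_exists_add_eq φ _ fun m _ => hbelow m,
      ← ncard_setOf_add_eq_sum_antidiagonal hdeg hfib]
    simp
  refine ⟨hbelow, hfib, hconv, ?_⟩
  ext k
  simp only [PowerSeries.coeff_mul, PowerSeries.coeff_mk, ← Nat.cast_sum,
    ← ncard_setOf_comp_eq_sum (hdeg _) hφ]
  exact_mod_cast (hconv k).symm
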